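/- Work in ℝ⁴ (n = 4). For every valid list ⟨a₁,…,a₈⟩ of length exactly 8 over {1,2,3,4}, the nine open simplices whose vertex sets are the columns of N₀ = I, N₁ = M_{a₁}, N₂ = M_{a₁}M_{a₂}, …, N₈ = M_{a₁}⋯M_{a₈} are pairwise disjoint. (Every valid list of eight entries unfolds to form a partial net of the 4-orthoplex.) -/

import Mathlib

/-- The reflection matrix `M_a` for `n = 4` (0-indexed): the identity except that the
`a`-th column has `-1` in the `a`-th entry and `2/3` in every other entry. -/
noncomputable def reflMat4 (a : Fin 4) : Matrix (Fin 4) (Fin 4) ℝ :=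
  fun i j => if j = a then (if i = a then -1 else 2 / 3) else if i = j then 1 else 0

/-- A list over `{1,…,n}` (as `Fin n`) is valid if no nonempty block of consecutive entries
has every value occurring an even number of times (equivalently, it encodes a self-avoiding
path on the 1-skeleton of the `n`-cube). -/
def IsValidList {n : ℕ} (l : List (Fin n)) : Prop :=
  ∀ j k : ℕ, j < k → k ≤ l.length →
    ¬ ∀ m : Fin n, Even (((l.drop j).take (k - j)).count m)

/-- The open simplex on the columns of a matrix `A`: all points `A ⬝ c` where `c` has
strictly positive coordinates summing to `1`. -/
def openSimplexOf (A : Matrix (Fin 4) (Fin 4) ℝ) : Set (Fin 4 → ℝ) :=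
  {x | ∃ c : Fin 4 → ℝ, (∀ i, 0 < c i) ∧ (∑ i, c i = 1) ∧ x = A.mulVec c}

/-! ### Auxiliary machinery -/

abbrev M16 := ℤ×ℤ×ℤ×ℤ×ℤ×ℤ×ℤ×ℤ×ℤ×ℤ×ℤ×ℤ×ℤ×ℤ×ℤ×ℤ

def mul16 : M16 → M16 → M16
  | (a00, a01, a02, a03, a10, a11, a12, a13, a20, a21, a22, a23, a30, a31, a32, a33), (b00, b01, b02, b03, b10, b11, b12, b13, b20, b21, b22, b23, b30, b31, b32, b33) =>
    (a00 * b00 + a01 * b10 + a02 * b20 + a03 * b30,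
     a00 * b01 + a01 * b11 + a02 * b21 + a03 * b31,
     a00 * b02 + a01 * b12 + a02 * b22 + a03 * b32,
     a00 * b03 + a01 * b13 + a02 * b23 + a03 * b33,
     a10 * b00 + a11 * b10 + a12 * b20 + a13 * b30,
     a10 * b01 + a11 * b11 + a12 * b21 + a13 * b31,
     a10 * b02 + a11 * b12 + a12 * b22 + a13 * b32,
     a10 * b03 + a11 * b13 + a12 * b23 + a13 * b33,
     a20 * b00 + a21 * b10 + a22 * b20 + a23 * b30,
     a20 * b01 + a21 * b11 + a22 * b21 + a23 * b31,
     a20 * b02 + a21 * b12 + a22 * b22 + a23 * b32,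
     a20 * b03 + a21 * b13 + a22 * b23 + a23 * b33,
     a30 * b00 + a31 * b10 + a32 * b20 + a33 * b30,
     a30 * b01 + a31 * b11 + a32 * b21 + a33 * b31,
     a30 * b02 + a31 * b12 + a32 * b22 + a33 * b32,
     a30 * b03 + a31 * b13 + a32 * b23 + a33 * b33)

def intT : Fin 4 → M16
  | 0 => (-3, 0, 0, 0, 2, 3, 0, 0, 2, 0, 3, 0, 2, 0, 0, 3)
  | 1 => (3, 2, 0, 0, 0, -3, 0, 0, 0, 2, 3, 0, 0, 2, 0, 3)
  | 2 => (3, 0, 2, 0, 0, 3, 2, 0, 0, 0, -3, 0, 0, 0, 2, 3)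
  | 3 => (3, 0, 0, 2, 0, 3, 0, 2, 0, 0, 3, 2, 0, 0, 0, -3)

def cands16 : List (ℤ × ℤ × ℤ × ℤ × ℤ) :=
  [(-3, 1, 1, 1, 1), (1, -3, 1, 1, 1), (-1, -1, -1, 3, 3)]

def certOK16 (s : ℤ) (A : M16) : Bool :=
  match A with
  | (a00, a01, a02, a03, a10, a11, a12, a13, a20, a21, a22, a23, a30, a31, a32, a33) =>
    cands16.any fun (f0, f1, f2, f3, mx) =>
      let c := s * mx
      let v0 := f0 * a00 + f1 * a10 + f2 * a20 + f3 * a30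
      let v1 := f0 * a01 + f1 * a11 + f2 * a21 + f3 * a31
      let v2 := f0 * a02 + f1 * a12 + f2 * a22 + f3 * a32
      let v3 := f0 * a03 + f1 * a13 + f2 * a23 + f3 * a33
      (c ≤ v0 && c ≤ v1 && c ≤ v2 && c ≤ v3) && (c < v0 || c < v1 || c < v2 || c < v3)

def toMat : M16 → Matrix (Fin 4) (Fin 4) ℤ
  | (a00, a01, a02, a03, a10, a11, a12, a13, a20, a21, a22, a23, a30, a31, a32, a33) =>
    !![a00, a01, a02, a03; a10, a11, a12, a13; a20, a21, a22, a23; a30, a31, a32, a33]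

def one16 : M16 := (1, 0, 0, 0, 0, 1, 0, 0, 0, 0, 1, 0, 0, 0, 0, 1)

def prod16 (t : List (Fin 4)) : M16 := t.foldl (fun A a => mul16 A (intT a)) one16

def par (t : List (Fin 4)) : ℕ :=
  ((t.map Fin.val).count 0 % 2) + 2 * ((t.map Fin.val).count 1 % 2) +
    4 * ((t.map Fin.val).count 2 % 2) + 8 * ((t.map Fin.val).count 3 % 2)

def pflip (a : Fin 4) (p : ℕ) : ℕ :=
  if p / 2 ^ a.val % 2 = 1 then p - 2 ^ a.val else p + 2 ^ a.val

def canonAux : List (Fin 4) → ℕ → Bool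
  | [], _ => true
  | a :: t, k => decide (a.val ≤ k) && canonAux t (max k (a.val + 1))

def dfs16 : ℕ → ℕ → List ℕ → ℤ → M16 → ℕ → Bool
  | 0, _, _, s, A, _ => certOK16 s A
  | n+1, p, ps, s, A, k =>
    certOK16 s A &&
    ((List.finRange 4).all fun a =>
        decide (k < a.val) ||
        (decide (pflip a p ∈ ps) ||
         dfs16 n (pflip a p) (pflip a p :: ps) (3 * s) (mul16 A (intT a)) (max k (a.val + 1))))

set_option maxRecDepth 100000 in
set_option maxHeartbeats 1000000 in
lemma dfs16_start :
    dfs16 7 (par [(0 : Fin 4)]) [par [(0 : Fin 4)], par ([] : List (Fin 4))]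
      ((3:ℤ) ^ ([(0 : Fin 4)] : List (Fin 4)).length) (prod16 [(0 : Fin 4)]) 1 = true := by
  decide

/-! ### Parity lemmas -/

lemma par_eq_imp {u v : List (Fin 4)} (h : par u = par v) :
    ∀ m : Fin 4, u.count m % 2 = v.count m % 2 := by
  intro m
  have hcnt : ∀ w : List (Fin 4), w.count m = (w.map Fin.val).count m.val := fun w =>
    (List.count_map_of_injective w Fin.val Fin.val_injective m).symm
  rw [hcnt u, hcnt v]
  unfold par at h
  have hm : m.val = 0 ∨ m.val = 1 ∨ m.val = 2 ∨ m.val = 3 := by omega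
  rcases hm with h' | h' | h' | h' <;> rw [h'] <;> omega

lemma par_append (t : List (Fin 4)) (b : Fin 4) : par (t ++ [b]) = pflip b (par t) := by
  unfold par pflip
  simp only [List.map_append, List.map_cons, List.map_nil, List.count_append]
  have hb : b.val = 0 ∨ b.val = 1 ∨ b.val = 2 ∨ b.val = 3 := by omega
  rcases hb with h | h | h | h <;> rw [h] <;> simp <;> split_ifs <;> omega

lemma par_take_ne (u : List (Fin 4)) (h : IsValidList u) {j k : ℕ} (hjk : j < k)
    (hk : k ≤ u.length) : par (u.take j) ≠ par (u.take k) := by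
  intro hpar
  apply h j k hjk hk
  intro m
  have hsplit : u.take k = u.take j ++ (u.drop j).take (k - j) := by
    have h5 := List.take_add (l := u) (i := j) (j := k - j)
    rw [show j + (k - j) = k by omega] at h5
    exact h5
  have := par_eq_imp hpar m
  rw [hsplit, List.count_append] at this
  rw [Nat.even_iff]
  omega

/-! ### Canonicalization -/

lemma exists_canon (t : List (Fin 4)) : ∀ (k : ℕ) (τ : Equiv.Perm (Fin 4)),
    ∃ τ' : Equiv.Perm (Fin 4), (∀ x, (τ x).val < k → τ' x = τ x) ∧
      canonAux (t.map τ') k = true := by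
  induction t with
  | nil => exact fun k τ => ⟨τ, fun _ _ => rfl, rfl⟩
  | cons a t ih =>
    intro k τ
    by_cases h : (τ a).val < k
    · obtain ⟨τ', hag, hc⟩ := ih k τ
      refine ⟨τ', hag, ?_⟩
      have ha : τ' a = τ a := hag a h
      rw [List.map_cons]
      show (decide ((τ' a).val ≤ k) && canonAux (t.map τ') (max k ((τ' a).val + 1))) = true
      have h2 : max k ((τ' a).val + 1) = k := by rw [ha]; omega
      have h1 : (τ' a).val ≤ k := by rw [ha]; omega
      rw [h2]
      simp [hc, h1]
    · have hka : k ≤ (τ a).val := not_lt.mp h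
      have hk4 : k < 4 := lt_of_le_of_lt hka (τ a).isLt
      set σ := Equiv.swap (τ a) ⟨k, hk4⟩ with hσ
      obtain ⟨τ', hag, hc⟩ := ih (k + 1) (τ.trans σ)
      have hτa : (τ.trans σ) a = ⟨k, hk4⟩ := by
        rw [Equiv.trans_apply, hσ]
        exact Equiv.swap_apply_left _ _
      have hfix : ∀ x, (τ x).val < k → (τ.trans σ) x = τ x := by
        intro x hx
        have h1 : τ x ≠ τ a := by
          intro he
          rw [he] at hx
          omega
        have h2 : τ x ≠ ⟨k, hk4⟩ := by
          intro he
          rw [he] at hx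
          exact absurd hx (lt_irrefl k)
        rw [Equiv.trans_apply, hσ]
        exact Equiv.swap_apply_of_ne_of_ne h1 h2
      refine ⟨τ', ?_, ?_⟩
      · intro x hx
        have hlt : ((τ.trans σ) x).val < k + 1 := by rw [hfix x hx]; omega
        rw [hag x hlt, hfix x hx]
      · have hτ'a : τ' a = ⟨k, hk4⟩ := by
          have hlt : ((τ.trans σ) a).val < k + 1 := by rw [hτa]; exact Nat.lt_succ_self k
          rw [hag a hlt, hτa]
        have hval' : (τ' a).val = k := by rw [hτ'a]
        rw [List.map_cons]
        show (decide ((τ' a).val ≤ k) && canonAux (t.map τ') (max k ((τ' a).val + 1))) = true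
        rw [hval', Nat.max_eq_right (Nat.le_succ k)]
        simp [hc]

/-! ### Validity of sublists -/

lemma valid_prefix {u v : List (Fin 4)} (h : IsValidList (u ++ v)) : IsValidList u := by
  intro j k hjk hk hall
  have h1 : j - u.length = 0 := by omega
  have hblock : ((u ++ v).drop j).take (k - j) = (u.drop j).take (k - j) := by
    rw [List.drop_append, h1, List.drop_zero,
      List.take_append]
    have h2 : (k - j) - (u.drop j).length = 0 := by
      rw [List.length_drop]; omega
    rw [h2, List.take_zero, List.append_nil]
  exact h j k hjk (by rw [List.length_append]; omega) (by rw [hblock]; exact hall)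

lemma valid_suffix {u v : List (Fin 4)} (h : IsValidList (u ++ v)) : IsValidList v := by
  intro j k hjk hk hall
  apply h (u.length + j) (u.length + k) (by omega) (by rw [List.length_append]; omega)
  have hblock : ((u ++ v).drop (u.length + j)).take ((u.length + k) - (u.length + j)) =
      (v.drop j).take (k - j) := by
    rw [List.drop_append]
    have h1 : u.length + j - u.length = j := by omega
    have h2 : u.drop (u.length + j) = [] := List.drop_eq_nil_of_le (by omega)
    have h3 : (u.length + k) - (u.length + j) = k - j := by omega
    rw [h1, h2, List.nil_append, h3]
  rw [hblock]
  exact hall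

lemma valid_map (τ : Equiv.Perm (Fin 4)) {t : List (Fin 4)} (h : IsValidList t) :
    IsValidList (t.map τ) := by
  intro j k hjk hk hall
  apply h j k hjk (by simpa using hk)
  intro m
  have := hall (τ m)
  have hb : (((t.map ⇑τ).drop j).take (k - j)) = (((t.drop j).take (k - j)).map ⇑τ) := by
    rw [← List.map_drop, ← List.map_take]
  rw [hb, List.count_map_of_injective _ _ τ.injective] at this
  exact this

/-! ### DFS soundness -/

lemma dfs16_sound : ∀ (n : ℕ) (t : List (Fin 4)) (ps : List ℕ) (k : ℕ),
    (∀ j, j ≤ t.length → par (t.take j) ∈ ps) →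
    (∀ q ∈ ps, ∃ j, j ≤ t.length ∧ q = par (t.take j)) →
    dfs16 n (par t) ps ((3:ℤ) ^ t.length) (prod16 t) k = true →
    ∀ s : List (Fin 4), s.length ≤ n → IsValidList (t ++ s) → canonAux s k = true →
    certOK16 ((3:ℤ) ^ (t ++ s).length) (prod16 (t ++ s)) = true := by
  intro n
  induction n with
  | zero =>
    intro t ps k _ _ hdfs s hs _ _
    have hnil : s = [] := List.length_eq_zero_iff.mp (Nat.le_zero.mp hs)
    subst hnil
    rw [List.append_nil]
    exact hdfs
  | succ n ih =>
    intro t ps k h1 h2 hdfs s hs hval hcan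
    rw [dfs16, Bool.and_eq_true] at hdfs
    obtain ⟨hcert, hrest⟩ := hdfs
    cases s with
    | nil => rw [List.append_nil]; exact hcert
    | cons b s' =>
      have hb := (List.all_eq_true.mp hrest) b (List.mem_finRange b)
      simp only [canonAux, Bool.and_eq_true, decide_eq_true_eq] at hcan
      obtain ⟨hbk, hcan2⟩ := hcan
      have hklt : decide (k < b.val) = false := by simp; omega
      rw [hklt, Bool.false_or] at hb
      have happ : t ++ b :: s' = (t ++ [b]) ++ s' := by simp
      have hvp : IsValidList (t ++ [b]) := by
        rw [happ] at hval; exact valid_prefix hval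
      have e2 : ∀ j, j ≤ t.length → (t ++ [b]).take j = t.take j := by
        intro j hj
        rw [List.take_append]
        have : j - t.length = 0 := by omega
        rw [this, List.take_zero, List.append_nil]
      have efull : (t ++ [b]).take (t.length + 1) = t ++ [b] := by
        have : t.length + 1 = (t ++ [b]).length := by simp
        rw [this, List.take_length]
      have hnotmem : (pflip b (par t)) ∉ ps := by
        intro hmemq
        obtain ⟨j, hj, hq⟩ := h2 _ hmemq
        apply par_take_ne (t ++ [b]) hvp (show j < t.length + 1 by omega) (by simp)
        rw [e2 j hj, efull, par_append, ← hq]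
      have hnm : decide (pflip b (par t) ∈ ps) = false := by
        simp [hnotmem]
      rw [hnm, Bool.false_or] at hb
      have hpar' : par (t ++ [b]) = pflip b (par t) := par_append t b
      have hpow : (3:ℤ) ^ (t ++ [b]).length = 3 * (3:ℤ) ^ t.length := by
        simp [List.length_append, pow_succ]; ring
      have hprod : prod16 (t ++ [b]) = mul16 (prod16 t) (intT b) := by
        unfold prod16
        rw [List.foldl_append]
        rfl
      rw [happ]
      apply ih (t ++ [b]) (pflip b (par t) :: ps) (max k (b.val + 1)) ?_ ?_ ?_ s'
        (by simp only [List.length_cons] at hs; omega) (by rw [← happ]; exact hval) hcan2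
      · intro j hj
        rw [List.length_append, List.length_cons, List.length_nil, Nat.zero_add] at hj
        rcases Nat.lt_or_ge j (t.length + 1) with hlt | hge
        · have hj' : j ≤ t.length := by omega
          rw [e2 j hj']
          exact List.mem_cons_of_mem _ (h1 j hj')
        · have hj' : j = t.length + 1 := by omega
          rw [hj', efull, hpar']
          exact List.mem_cons_self
      · intro q hq
        rcases List.mem_cons.mp hq with hq | hq
        · exact ⟨t.length + 1, by simp, by rw [efull, hpar', hq]⟩
        · obtain ⟨j, hj, hqj⟩ := h2 q hq
          exact ⟨j, by simp; omega, by rw [e2 j hj]; exact hqj⟩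
      · rw [hpar', hpow, hprod]
        exact hb

/-! ### From integer matrices to real matrices -/

lemma toMat_one : toMat one16 = 1 := by
  ext i j
  fin_cases i <;> fin_cases j <;>
    simp (config := { decide := true }) [toMat, one16, Matrix.one_apply, Matrix.vecHead,
      Matrix.vecTail]

lemma toMat_mul (A B : M16) : toMat (mul16 A B) = toMat A * toMat B := by
  obtain ⟨a00, a01, a02, a03, a10, a11, a12, a13, a20, a21, a22, a23, a30, a31, a32, a33⟩ := A
  obtain ⟨b00, b01, b02, b03, b10, b11, b12, b13, b20, b21, b22, b23, b30, b31, b32, b33⟩ := B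
  ext i j
  fin_cases i <;> fin_cases j <;>
    simp (config := { decide := true }) [toMat, mul16, Matrix.mul_apply, Fin.sum_univ_four,
      Matrix.vecHead, Matrix.vecTail] <;> ring

lemma refl_eq (a : Fin 4) :
    reflMat4 a = ((3:ℝ))⁻¹ • (toMat (intT a)).map (fun z : ℤ => (z : ℝ)) := by
  fin_cases a <;>
    · ext i j
      fin_cases i <;> fin_cases j <;>
        simp (config := { decide := true }) [reflMat4, toMat, intT, Matrix.map_apply,
          Matrix.vecHead, Matrix.vecTail] <;> norm_num

lemma castMap_mul (X Y : Matrix (Fin 4) (Fin 4) ℤ) :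
    (X * Y).map (fun z : ℤ => (z : ℝ)) =
      X.map (fun z : ℤ => (z : ℝ)) * Y.map (fun z : ℤ => (z : ℝ)) := by
  have h := Matrix.map_mul (L := X) (M := Y) (f := Int.castRingHom ℝ)
  simpa using h

lemma prod16_append (t : List (Fin 4)) (a : Fin 4) :
    prod16 (t ++ [a]) = mul16 (prod16 t) (intT a) := by
  unfold prod16
  rw [List.foldl_append]
  rfl

lemma prodR_eq (t : List (Fin 4)) :
    (t.map reflMat4).prod =
      ((3:ℝ) ^ t.length)⁻¹ • (toMat (prod16 t)).map (fun z : ℤ => (z : ℝ)) := by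
  induction t using List.reverseRecOn with
  | nil => simp [prod16, toMat_one]
  | append_singleton t a ih =>
    rw [List.map_append, List.prod_append, List.map_singleton, List.prod_singleton, ih,
      refl_eq, prod16_append, toMat_mul, castMap_mul, Matrix.smul_mul, Matrix.mul_smul,
      smul_smul]
    congr 1
    rw [List.length_append, List.length_singleton, pow_succ, mul_inv]

/-! ### The analytic separation lemma -/

lemma analytic (k : ℕ) (P : Matrix (Fin 4) (Fin 4) ℝ) (A : Matrix (Fin 4) (Fin 4) ℤ)
    (f : Fin 4 → ℤ) (mx : ℤ)
    (hP : P = ((3:ℝ) ^ k)⁻¹ • A.map (fun z : ℤ => (z : ℝ)))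
    (hfle : ∀ i, f i ≤ mx) (hne : ∃ i, f i < mx)
    (hle : ∀ j, (3:ℤ) ^ k * mx ≤ ∑ i, f i * A i j)
    (hlt : ∃ j, (3:ℤ) ^ k * mx < ∑ i, f i * A i j) :
    Disjoint (openSimplexOf 1) (openSimplexOf P) := by
  rw [Set.disjoint_left]
  rintro x ⟨d, hd, hds, hxd⟩ ⟨e, he, hes, hxe⟩
  have h3 : (0:ℝ) < (3:ℝ) ^ k := by positivity
  have hxd' : x = d := by rw [hxd, Matrix.one_mulVec]
  have hupper : ∑ i, (f i : ℝ) * x i < (mx : ℝ) := by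
    rw [hxd']
    obtain ⟨i0, hi0⟩ := hne
    have hstep := Finset.sum_lt_sum (s := Finset.univ)
      (f := fun i => (f i : ℝ) * d i) (g := fun i => (mx : ℝ) * d i)
      (fun i _ => mul_le_mul_of_nonneg_right (by exact_mod_cast hfle i) (hd i).le)
      ⟨i0, Finset.mem_univ i0, mul_lt_mul_of_pos_right (by exact_mod_cast hi0) (hd i0)⟩
    calc ∑ i, (f i : ℝ) * d i < ∑ i, (mx : ℝ) * d i := hstep
    _ = (mx : ℝ) := by rw [← Finset.mul_sum, hds, mul_one]
  have hPij : ∀ i j, P i j = ((3:ℝ) ^ k)⁻¹ * (A i j : ℝ) := by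
    intro i j
    rw [hP]
    simp [Matrix.smul_apply, Matrix.map_apply, smul_eq_mul]
  have hcast : ∀ j, ((3:ℝ) ^ k) * (mx : ℝ) ≤ ∑ i, (f i : ℝ) * (A i j : ℝ) := by
    intro j
    have : (((3:ℤ) ^ k * mx : ℤ) : ℝ) ≤ ((∑ i, f i * A i j : ℤ) : ℝ) := by
      exact_mod_cast hle j
    push_cast at this
    exact this
  have heq : ∀ j, ∑ i, (f i : ℝ) * P i j = ((3:ℝ) ^ k)⁻¹ * ∑ i, (f i : ℝ) * (A i j : ℝ) := by
    intro j
    rw [Finset.mul_sum]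
    refine Finset.sum_congr rfl fun i _ => ?_
    rw [hPij]
    ring
  have hgj : ∀ j, (mx : ℝ) ≤ ∑ i, (f i : ℝ) * P i j := by
    intro j
    rw [heq]
    have hmul := mul_le_mul_of_nonneg_left (hcast j) (inv_pos.mpr h3).le
    calc (mx : ℝ) = ((3:ℝ) ^ k)⁻¹ * ((3:ℝ) ^ k * (mx : ℝ)) := by field_simp
    _ ≤ ((3:ℝ) ^ k)⁻¹ * ∑ i, (f i : ℝ) * (A i j : ℝ) := hmul
  obtain ⟨j0, hj0⟩ := hlt
  have hgj0 : (mx : ℝ) < ∑ i, (f i : ℝ) * P i j0 := by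
    rw [heq]
    have hcast0 : ((3:ℝ) ^ k) * (mx : ℝ) < ∑ i, (f i : ℝ) * (A i j0 : ℝ) := by
      have : (((3:ℤ) ^ k * mx : ℤ) : ℝ) < ((∑ i, f i * A i j0 : ℤ) : ℝ) := by
        exact_mod_cast hj0
      push_cast at this
      exact this
    have hmul := mul_lt_mul_of_pos_left hcast0 (inv_pos.mpr h3)
    calc (mx : ℝ) = ((3:ℝ) ^ k)⁻¹ * ((3:ℝ) ^ k * (mx : ℝ)) := by field_simp
    _ < ((3:ℝ) ^ k)⁻¹ * ∑ i, (f i : ℝ) * (A i j0 : ℝ) := hmul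
  have hlower : (mx : ℝ) < ∑ i, (f i : ℝ) * x i := by
    rw [hxe]
    have hswap : ∑ i, (f i : ℝ) * (P.mulVec e) i
        = ∑ j, (∑ i, (f i : ℝ) * P i j) * e j := by
      simp only [Matrix.mulVec, dotProduct, Finset.mul_sum, Finset.sum_mul]
      rw [Finset.sum_comm]
      refine Finset.sum_congr rfl fun j _ => Finset.sum_congr rfl fun i _ => by ring
    rw [hswap]
    have hstep := Finset.sum_lt_sum (s := Finset.univ)
      (f := fun j => (mx : ℝ) * e j) (g := fun j => (∑ i, (f i : ℝ) * P i j) * e j)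
      (fun j _ => mul_le_mul_of_nonneg_right (hgj j) (he j).le)
      ⟨j0, Finset.mem_univ j0, mul_lt_mul_of_pos_right hgj0 (he j0)⟩
    calc (mx : ℝ) = ∑ j, (mx : ℝ) * e j := by rw [← Finset.mul_sum, hes, mul_one]
    _ < ∑ j, (∑ i, (f i : ℝ) * P i j) * e j := hstep
  linarith

/-! ### Certificate implies disjointness -/

lemma bridge (t : List (Fin 4))
    (h : certOK16 ((3:ℤ) ^ t.length) (prod16 t) = true) :
    Disjoint (openSimplexOf 1) (openSimplexOf ((t.map reflMat4).prod)) := by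
  have hP := prodR_eq t
  obtain ⟨T, hT⟩ : ∃ T, prod16 t = T := ⟨_, rfl⟩
  rw [hT] at h hP
  obtain ⟨a00, a01, a02, a03, a10, a11, a12, a13, a20, a21, a22, a23, a30, a31, a32, a33⟩ := T
  simp only [certOK16, cands16, List.any_cons, List.any_nil, Bool.or_false,
    Bool.or_eq_true, Bool.and_eq_true, decide_eq_true_eq] at h
  rcases h with ⟨⟨⟨⟨h1, h2⟩, h3⟩, h4⟩, h5⟩ | ⟨⟨⟨⟨h1, h2⟩, h3⟩, h4⟩, h5⟩ | ⟨⟨⟨⟨h1, h2⟩, h3⟩, h4⟩, h5⟩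
  · refine analytic t.length _ _ ![-3, 1, 1, 1] 1 hP (by decide) ⟨0, by decide⟩ ?_ ?_
    · intro j
      fin_cases j <;> simp [Fin.sum_univ_four, toMat, Matrix.vecHead, Matrix.vecTail] <;> omega
    · rcases h5 with ((h5 | h5) | h5) | h5
      · exact ⟨0, by simp [Fin.sum_univ_four, toMat, Matrix.vecHead, Matrix.vecTail]; omega⟩
      · exact ⟨1, by simp [Fin.sum_univ_four, toMat, Matrix.vecHead, Matrix.vecTail]; omega⟩
      · exact ⟨2, by simp [Fin.sum_univ_four, toMat, Matrix.vecHead, Matrix.vecTail]; omega⟩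
      · exact ⟨3, by simp [Fin.sum_univ_four, toMat, Matrix.vecHead, Matrix.vecTail]; omega⟩
  · refine analytic t.length _ _ ![1, -3, 1, 1] 1 hP (by decide) ⟨1, by decide⟩ ?_ ?_
    · intro j
      fin_cases j <;> simp [Fin.sum_univ_four, toMat, Matrix.vecHead, Matrix.vecTail] <;> omega
    · rcases h5 with ((h5 | h5) | h5) | h5
      · exact ⟨0, by simp [Fin.sum_univ_four, toMat, Matrix.vecHead, Matrix.vecTail]; omega⟩
      · exact ⟨1, by simp [Fin.sum_univ_four, toMat, Matrix.vecHead, Matrix.vecTail]; omega⟩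
      · exact ⟨2, by simp [Fin.sum_univ_four, toMat, Matrix.vecHead, Matrix.vecTail]; omega⟩
      · exact ⟨3, by simp [Fin.sum_univ_four, toMat, Matrix.vecHead, Matrix.vecTail]; omega⟩
  · refine analytic t.length _ _ ![-1, -1, -1, 3] 3 hP (by decide) ⟨0, by decide⟩ ?_ ?_
    · intro j
      fin_cases j <;> simp [Fin.sum_univ_four, toMat, Matrix.vecHead, Matrix.vecTail] <;> omega
    · rcases h5 with ((h5 | h5) | h5) | h5
      · exact ⟨0, by simp [Fin.sum_univ_four, toMat, Matrix.vecHead, Matrix.vecTail]; omega⟩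
      · exact ⟨1, by simp [Fin.sum_univ_four, toMat, Matrix.vecHead, Matrix.vecTail]; omega⟩
      · exact ⟨2, by simp [Fin.sum_univ_four, toMat, Matrix.vecHead, Matrix.vecTail]; omega⟩
      · exact ⟨3, by simp [Fin.sum_univ_four, toMat, Matrix.vecHead, Matrix.vecTail]; omega⟩

/-! ### Permutation transfer -/

lemma refl_perm (σ : Equiv.Perm (Fin 4)) (a : Fin 4) :
    reflMat4 (σ a) = (reflMat4 a).submatrix σ.symm σ.symm := by
  ext i j
  simp only [reflMat4, Matrix.submatrix_apply, Equiv.symm_apply_eq,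
    EmbeddingLike.apply_eq_iff_eq, Equiv.apply_symm_apply]

lemma prod_perm (σ : Equiv.Perm (Fin 4)) (t : List (Fin 4)) :
    ((t.map fun a => σ a).map reflMat4).prod
      = ((t.map reflMat4).prod).submatrix σ.symm σ.symm := by
  induction t with
  | nil => simp
  | cons a t ih =>
    simp only [List.map_cons, List.prod_cons, ih, refl_perm σ a]
    rw [Matrix.submatrix_mul_equiv]

lemma simplex_submatrix (B : Matrix (Fin 4) (Fin 4) ℝ) (e : Equiv.Perm (Fin 4)) :
    openSimplexOf (B.submatrix e e) = (fun x => x ∘ e) '' openSimplexOf B := by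
  ext x
  constructor
  · rintro ⟨c, hc, hcs, rfl⟩
    refine ⟨B.mulVec (c ∘ e.symm), ⟨c ∘ e.symm, fun i => hc _, ?_, rfl⟩, ?_⟩
    · rw [← hcs]; exact Equiv.sum_comp e.symm c
    · rw [Matrix.submatrix_mulVec_equiv]
  · rintro ⟨y, ⟨c, hc, hcs, rfl⟩, rfl⟩
    refine ⟨c ∘ e, fun i => hc _, ?_, ?_⟩
    · rw [← hcs]; exact Equiv.sum_comp e c
    · rw [Matrix.submatrix_mulVec_equiv]
      have : (c ∘ ⇑e) ∘ ⇑e.symm = c := by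
        funext i; simp [Function.comp, Equiv.apply_symm_apply]
      rw [this]

lemma comp_inj (e : Equiv.Perm (Fin 4)) :
    Function.Injective (fun x : Fin 4 → ℝ => x ∘ e) := by
  intro x y hxy
  funext i
  have := congrFun hxy (e.symm i)
  simpa using this

lemma disjoint_perm (A : Matrix (Fin 4) (Fin 4) ℝ) (e : Equiv.Perm (Fin 4)) :
    Disjoint (openSimplexOf 1) (openSimplexOf (A.submatrix e e))
      ↔ Disjoint (openSimplexOf 1) (openSimplexOf A) := by
  have h1 : openSimplexOf (1 : Matrix (Fin 4) (Fin 4) ℝ)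
      = (fun x => x ∘ e) '' openSimplexOf 1 := by
    conv_lhs => rw [show (1 : Matrix (Fin 4) (Fin 4) ℝ)
      = (1 : Matrix (Fin 4) (Fin 4) ℝ).submatrix e e from (Matrix.submatrix_one_equiv e).symm]
    exact simplex_submatrix 1 e
  rw [simplex_submatrix]
  conv_lhs => rw [h1]
  rw [Set.disjoint_image_iff (comp_inj e)]

/-! ### Key lemma: valid nonempty lists of length ≤ 8 give disjointness from the base -/

lemma key (t : List (Fin 4)) (hne : t ≠ []) (hlen : t.length ≤ 8) (hval : IsValidList t) :
    Disjoint (openSimplexOf 1) (openSimplexOf ((t.map reflMat4).prod)) := by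
  obtain ⟨τ, -, hcanon⟩ := exists_canon t 0 (Equiv.refl _)
  have hval' : IsValidList (t.map τ) := valid_map τ hval
  have hlen' : (t.map τ).length ≤ 8 := by simpa using hlen
  obtain ⟨b, s, hbs⟩ : ∃ b s, t.map ⇑τ = b :: s := by
    cases hu : t.map ⇑τ with
    | nil => exact absurd (List.map_eq_nil_iff.mp hu) hne
    | cons b s => exact ⟨b, s, rfl⟩
  rw [hbs] at hcanon hval' hlen'
  have hb0 : b = 0 := by
    simp only [canonAux, Bool.and_eq_true, decide_eq_true_eq] at hcanon
    have := hcanon.1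
    exact Fin.ext (by omega)
  subst hb0
  have hcan2 : canonAux s 1 = true := by
    simp only [canonAux, Bool.and_eq_true, decide_eq_true_eq] at hcanon
    have := hcanon.2
    simpa using this
  have hps1 : ∀ j, j ≤ ([(0 : Fin 4)] : List (Fin 4)).length →
      par (([(0 : Fin 4)] : List (Fin 4)).take j)
        ∈ [par [(0 : Fin 4)], par ([] : List (Fin 4))] := by
    intro j hj
    simp only [List.length_cons, List.length_nil] at hj
    interval_cases j
    · simp
    · simp
  have hps2 : ∀ q ∈ [par [(0 : Fin 4)], par ([] : List (Fin 4))],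
      ∃ j, j ≤ ([(0 : Fin 4)] : List (Fin 4)).length ∧
        q = par (([(0 : Fin 4)] : List (Fin 4)).take j) := by
    intro q hq
    rcases List.mem_cons.mp hq with hq | hq
    · exact ⟨1, by simp, by rw [hq]; rfl⟩
    · rcases List.mem_cons.mp hq with hq | hq
      · exact ⟨0, by simp, by rw [hq]; rfl⟩
      · simp at hq
  have hval'' : IsValidList (([(0 : Fin 4)] : List (Fin 4)) ++ s) := hval'
  have hslen : s.length ≤ 7 := by
    simp only [List.length_cons] at hlen'
    omega
  have hcert := dfs16_sound 7 [(0 : Fin 4)] [par [(0 : Fin 4)], par ([] : List (Fin 4))] 1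
    hps1 hps2 dfs16_start s hslen hval'' hcan2
  have hdisj := bridge (((0 : Fin 4) :: s : List (Fin 4))) hcert
  rw [← hbs] at hdisj
  rw [show (t.map ⇑τ) = (t.map fun a => τ a) from rfl, prod_perm] at hdisj
  exact (disjoint_perm _ _).mp hdisj

/-! ### Products over sublists, invertibility -/

lemma openSimplexOf_mul (A B : Matrix (Fin 4) (Fin 4) ℝ) :
    openSimplexOf (A * B) = A.mulVec '' openSimplexOf B := by
  ext x
  constructor
  · rintro ⟨c, h1, h2, rfl⟩
    exact ⟨B.mulVec c, ⟨c, h1, h2, rfl⟩, by rw [Matrix.mulVec_mulVec]⟩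
  · rintro ⟨y, ⟨c, h1, h2, rfl⟩, rfl⟩
    exact ⟨c, h1, h2, by rw [Matrix.mulVec_mulVec]⟩

lemma refl_invol (a : Fin 4) : reflMat4 a * reflMat4 a = 1 := by
  fin_cases a <;>
    · ext i j
      fin_cases i <;> fin_cases j <;>
        simp (config := { decide := true }) [reflMat4, Matrix.mul_apply, Fin.sum_univ_four,
          Matrix.one_apply] <;> norm_num

lemma isUnit_reflProd (t : List (Fin 4)) : IsUnit ((t.map reflMat4).prod) := by
  induction t with
  | nil =>
    rw [List.map_nil, List.prod_nil]
    exact isUnit_one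
  | cons a t ih =>
    rw [List.map_cons, List.prod_cons]
    exact IsUnit.mul ⟨⟨reflMat4 a, reflMat4 a, refl_invol a, refl_invol a⟩, rfl⟩ ih

lemma mulVec_inj {P : Matrix (Fin 4) (Fin 4) ℝ} (h : IsUnit P) :
    Function.Injective P.mulVec := by
  obtain ⟨u, rfl⟩ := h
  intro x y hxy
  have h2 := congrArg (fun v => ((u⁻¹ : (Matrix (Fin 4) (Fin 4) ℝ)ˣ) : Matrix (Fin 4) (Fin 4) ℝ).mulVec v) hxy
  simp only [Matrix.mulVec_mulVec] at h2
  simp only [u.inv_mul, Units.val_one, Matrix.one_mulVec] at h2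
  exact h2

/-- Every valid list of length exactly `8` over `{1,2,3,4}` unfolds to form a partial net of
the 4-orthoplex: the nine open simplices on the columns of the partial products
`N₀ = I, N₁, …, N₈` are pairwise disjoint. -/
theorem valid_eight_list_partial_net (l : List (Fin 4)) (hlen : l.length = 8)
    (hval : IsValidList l) :
    ∀ i j : ℕ, i ≤ 8 → j ≤ 8 → i ≠ j →
      Disjoint (openSimplexOf ((l.take i).map reflMat4).prod)
        (openSimplexOf ((l.take j).map reflMat4).prod) := by
  have main : ∀ i j : ℕ, i < j → j ≤ 8 →
      Disjoint (openSimplexOf ((l.take i).map reflMat4).prod)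
        (openSimplexOf ((l.take j).map reflMat4).prod) := by
    intro i j hij hj
    have hseg : l.take j = l.take i ++ (l.drop i).take (j - i) := by
      have h1 : j = i + (j - i) := by omega
      conv_lhs => rw [h1]
      rw [List.take_add]
    have hdropval : IsValidList (l.drop i) := by
      have h2 := hval
      rw [← List.take_append_drop i l] at h2
      exact valid_suffix h2
    have hsegval : IsValidList ((l.drop i).take (j - i)) := by
      have h3 := hdropval
      rw [← List.take_append_drop (j - i) (l.drop i)] at h3
      exact valid_prefix h3
    have hseglen : ((l.drop i).take (j - i)).length = j - i := by
      rw [List.length_take, List.length_drop, hlen]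
      omega
    have hsegne : (l.drop i).take (j - i) ≠ [] := by
      intro h4
      rw [h4] at hseglen
      simp at hseglen
      omega
    have hkey := key ((l.drop i).take (j - i)) hsegne (by omega) hsegval
    rw [hseg, List.map_append, List.prod_append]
    have h1 : openSimplexOf ((l.take i).map reflMat4).prod
        = ((l.take i).map reflMat4).prod.mulVec '' openSimplexOf 1 := by
      rw [← openSimplexOf_mul, mul_one]
    rw [h1, openSimplexOf_mul,
      Set.disjoint_image_iff (mulVec_inj (isUnit_reflProd (l.take i)))]
    exact hkey
  intro i j hi hj hne
  rcases Nat.lt_or_ge i j with h | h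
  · exact main i j h hj
  · exact (main j i (by omega) hi).symm
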